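/- Under the assumptions of the previous identity, if additionally y'(0) = ỹ'(0) = 0 and y(b) = ỹ(b) = 0, then ∫_0^b [2λ(p − p̃) + (q − q̃)]·y·ỹ dx = 0. -/

import Mathlib

/-! Subtracting `ỹ` times the equation for `y` from `y` times the equation for `ỹ` shows that the
integrand is minus the derivative of the Wronskian `W = ỹ' y - y' ỹ`. By the fundamental theorem
of calculus the integral is `W 0 - W b`, and both values vanish by the boundary conditions. -/

open MeasureTheory Set

theorem intervalIntegral.integral_eq_sub_of_hasDerivWithinAt_Icc {E : Type*}
    [NormedAddCommGroup E] [NormedSpace ℝ E] [CompleteSpace E] {f f' : ℝ → E} {a b : ℝ}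
    (hab : a ≤ b) (hderiv : ∀ x ∈ Icc a b, HasDerivWithinAt f (f' x) (Icc a b) x)
    (hint : IntervalIntegrable f' volume a b) :
    ∫ x in a..b, f' x = f b - f a :=
  integral_eq_sub_of_hasDerivAt_of_le hab (fun x hx => (hderiv x hx).continuousWithinAt)
    (fun x hx => (hderiv x (Ioo_subset_Icc_self hx)).hasDerivAt (Icc_mem_nhds hx.1 hx.2)) hint

theorem hasDerivWithinAt_wronskian {𝕜 𝔸 : Type*} [NontriviallyNormedField 𝕜]
    [NormedCommRing 𝔸] [NormedAlgebra 𝕜 𝔸] {u u' u'' v v' v'' : 𝕜 → 𝔸} {s : Set 𝕜} {x : 𝕜}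
    (hu : HasDerivWithinAt u (u' x) s x) (hu' : HasDerivWithinAt u' (u'' x) s x)
    (hv : HasDerivWithinAt v (v' x) s x) (hv' : HasDerivWithinAt v' (v'' x) s x) :
    HasDerivWithinAt (fun t => v' t * u t - u' t * v t) (v'' x * u x - u'' x * v x) s x :=
  ((hv'.fun_mul hu).fun_sub (hu'.fun_mul hv)).congr_deriv (by ring)

theorem wronskian_orthogonality_general (b : ℝ) (hb : 0 < b) (lam : ℂ)
    (p pt q qt ρ : ℝ → ℝ)
    (hp : ContinuousOn p (Set.Icc 0 b)) (hpt : ContinuousOn pt (Set.Icc 0 b))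
    (hq : ContinuousOn q (Set.Icc 0 b)) (hqt : ContinuousOn qt (Set.Icc 0 b))
    (y y' y'' yt yt' yt'' : ℝ → ℂ)
    (hy1 : ∀ x ∈ Set.Icc (0:ℝ) b, HasDerivWithinAt y (y' x) (Set.Icc 0 b) x)
    (hy2 : ∀ x ∈ Set.Icc (0:ℝ) b, HasDerivWithinAt y' (y'' x) (Set.Icc 0 b) x)
    (hyt1 : ∀ x ∈ Set.Icc (0:ℝ) b, HasDerivWithinAt yt (yt' x) (Set.Icc 0 b) x)
    (hyt2 : ∀ x ∈ Set.Icc (0:ℝ) b, HasDerivWithinAt yt' (yt'' x) (Set.Icc 0 b) x)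
    (hode : ∀ x ∈ Set.Icc (0:ℝ) b,
      -y'' x + (2 * lam * (p x : ℂ) + (q x : ℂ)) * y x = lam ^ 2 * (ρ x : ℂ) * y x)
    (hodet : ∀ x ∈ Set.Icc (0:ℝ) b,
      -yt'' x + (2 * lam * (pt x : ℂ) + (qt x : ℂ)) * yt x = lam ^ 2 * (ρ x : ℂ) * yt x)
    (hy0 : y' 0 = 0) (hyt0 : yt' 0 = 0) (hyb : y b = 0) (hytb : yt b = 0) :
    (∫ x in (0:ℝ)..b,
        (2 * lam * ((p x : ℂ) - (pt x : ℂ)) + ((q x : ℂ) - (qt x : ℂ))) * (y x * yt x)) = 0 := by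
  set F : ℝ → ℂ := fun x =>
    (2 * lam * ((p x : ℂ) - (pt x : ℂ)) + ((q x : ℂ) - (qt x : ℂ))) * (y x * yt x)
  have hF : EqOn F (fun x => -(yt'' x * y x - y'' x * yt x)) (Icc 0 b) := fun x hx => by
    linear_combination yt x * hode x hx - y x * hodet x hx
  have hFcont : ContinuousOn F (Icc 0 b) := by
    have hyc : ContinuousOn y (Icc 0 b) := fun x hx => (hy1 x hx).continuousWithinAt
    have hytc : ContinuousOn yt (Icc 0 b) := fun x hx => (hyt1 x hx).continuousWithinAt
    fun_prop
  have hFTC := intervalIntegral.integral_eq_sub_of_hasDerivWithinAt_Icc hb.le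
    (fun x hx => hasDerivWithinAt_wronskian (hy1 x hx) (hy2 x hx) (hyt1 x hx) (hyt2 x hx))
    ((hFcont.neg.congr fun x hx => by simp [hF hx]).intervalIntegrable_of_Icc hb.le)
  rw [intervalIntegral.integral_congr (hF.mono (uIcc_of_le hb.le).subset),
    intervalIntegral.integral_neg, hFTC]
  simp [hy0, hyt0, hyb, hytb]

theorem wronskian_orthogonality (b : ℝ) (hb : 0 < b) (lam : ℂ)
    (p pt q qt ρ : ℝ → ℝ)
    (hp : ContinuousOn p (Set.Icc 0 b)) (hpt : ContinuousOn pt (Set.Icc 0 b))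
    (hq : ContinuousOn q (Set.Icc 0 b)) (hqt : ContinuousOn qt (Set.Icc 0 b))
    (hρ : ContinuousOn ρ (Set.Icc 0 b))
    (y y' y'' yt yt' yt'' : ℝ → ℂ)
    (hy1 : ∀ x ∈ Set.Icc (0:ℝ) b, HasDerivWithinAt y (y' x) (Set.Icc 0 b) x)
    (hy2 : ∀ x ∈ Set.Icc (0:ℝ) b, HasDerivWithinAt y' (y'' x) (Set.Icc 0 b) x)
    (hyt1 : ∀ x ∈ Set.Icc (0:ℝ) b, HasDerivWithinAt yt (yt' x) (Set.Icc 0 b) x)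
    (hyt2 : ∀ x ∈ Set.Icc (0:ℝ) b, HasDerivWithinAt yt' (yt'' x) (Set.Icc 0 b) x)
    (hode : ∀ x ∈ Set.Icc (0:ℝ) b,
      -y'' x + (2 * lam * (p x : ℂ) + (q x : ℂ)) * y x = lam ^ 2 * (ρ x : ℂ) * y x)
    (hodet : ∀ x ∈ Set.Icc (0:ℝ) b,
      -yt'' x + (2 * lam * (pt x : ℂ) + (qt x : ℂ)) * yt x = lam ^ 2 * (ρ x : ℂ) * yt x)
    (hy0 : y' 0 = 0) (hyt0 : yt' 0 = 0) (hyb : y b = 0) (hytb : yt b = 0) :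
    (∫ x in (0:ℝ)..b,
        (2 * lam * ((p x : ℂ) - (pt x : ℂ)) + ((q x : ℂ) - (qt x : ℂ))) * (y x * yt x)) = 0 :=
  wronskian_orthogonality_general b hb lam p pt q qt ρ hp hpt hq hqt y y' y'' yt yt' yt'' hy1 hy2
    hyt1 hyt2 hode hodet hy0 hyt0 hyb hytb
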